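/- arXiv:2311.01216 — 2 statements merged into one kernel-verified Lean document; each statement's English description precedes it below -/
import Mathlib

section
/- Lyapunov decrease for αPGD: let f : ℝⁿ → ℝ be convex and differentiable with ∇f L_f-Lipschitz, let φ : ℝⁿ → ℝ be M-weakly convex with M ≥ 0, let α ∈ (0,1) and τ > 0 satisfy τ·α·L_f < 1, and set F = f + φ. Let (q_k), (x_k), (y_k) be sequences with, for all k ≥ 0: q_{k+1} = (1−α)y_k + α·x_k; x_{k+1} a minimizer over ℝⁿ of u ↦ φ(u) + (1/(2τ))‖u − (x_k − τ·∇f(q_{k+1}))‖²; y_{k+1} = (1−α)y_k + α·x_{k+1}. Then for all k ≥ 1, F(y_k) − F(y_{k+1}) ≥ −δ·‖y_k − y_{k−1}‖² + γ·‖y_{k+1} − y_k‖², where δ = (α/(2τ))(1 − 1/α)² and γ = (1/α)(1/(2τ) − M(2−α)/2). Consequently, if in addition τ < α/M, the quantity E_k = F(y_k) + δ‖y_k − y_{k−1}‖² is non-increasing in k. -/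
/-!
Weak convexity of `φ` makes the proximal objective `φ + ‖· - z‖² / (2τ)` `(1/τ - M)`-strongly
convex, so its minimiser `x_{k+1}` beats the competitor `y_k` by `(1/τ - M)/2 ‖y_k - x_{k+1}‖²`.
The descent lemma at `q_{k+1}` and the gradient inequality of `f` bound `f(y_{k+1}) - f(y_k)` by a
gradient term that cancels against the linear term of this prox inequality. Adding the
weak-convexity bound for `φ` at `y_{k+1} = (1-α) y_k + α x_{k+1}` and spending `τ α L_f ≤ 1` on the
`‖x_{k+1} - x_k‖²` terms leaves an inequality in `‖y_k - x_k‖` and `‖x_{k+1} - y_k‖`, which are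
`‖y_k - y_{k-1}‖` and `‖y_{k+1} - y_k‖` rescaled by `(1-α)/α` and `1/α`. The Lyapunov statement
follows since `γ - δ = (2-α)(α - τM)/(2τα)`.
-/

open RealInnerProductSpace Set AffineMap

section NormedSpace

variable {E : Type*} [NormedAddCommGroup E] [NormedSpace ℝ E]

lemma StrongConvexOn.add {s : Set E} {m n : ℝ} {f g : E → ℝ} (hf : StrongConvexOn s m f)
    (hg : StrongConvexOn s n g) : StrongConvexOn s (m + n) (f + g) := by
  unfold StrongConvexOn
  convert UniformConvexOn.add hf hg using 1
  ext r
  simp only [Pi.add_apply]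
  ring

lemma StrongConvexOn.add_sq_le_of_isMinOn {s : Set E} {m : ℝ} {ψ : E → ℝ}
    (hψ : StrongConvexOn s m ψ) {p u : E} (hp : IsMinOn ψ s p) (hps : p ∈ s) (hus : u ∈ s) :
    ψ p + m / 2 * ‖u - p‖ ^ 2 ≤ ψ u := by
  have hshrink : ∀ t ∈ Ioc (0 : ℝ) 1, ψ p + (1 - t) * (m / 2 * ‖u - p‖ ^ 2) ≤ ψ u := by
    rintro t ⟨ht0, ht1⟩
    have hmin : ψ p ≤ ψ ((1 - t) • p + t • u) :=
      hp (hψ.1 hps hus (by linarith) ht0.le (by ring))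
    have hconv := hψ.2 hps hus (by linarith : (0 : ℝ) ≤ 1 - t) ht0.le (by ring)
    simp only [smul_eq_mul, norm_sub_rev p u] at hconv
    refine le_of_mul_le_mul_left ?_ ht0
    linarith
  have hlim : Filter.Tendsto (fun t : ℝ => ψ p + (1 - t) * (m / 2 * ‖u - p‖ ^ 2))
      (nhdsWithin 0 (Ioi 0)) (nhds (ψ p + (1 - 0) * (m / 2 * ‖u - p‖ ^ 2))) :=
    (Continuous.tendsto (by fun_prop) 0).mono_left nhdsWithin_le_nhds
  have := le_of_tendsto hlim (Filter.eventually_of_mem (Ioc_mem_nhdsGT zero_lt_one) hshrink)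
  simpa using this

end NormedSpace

section InnerProductSpace

variable {E : Type*} [NormedAddCommGroup E] [InnerProductSpace ℝ E]

lemma norm_smul_sq (c : ℝ) (v : E) : ‖c • v‖ ^ 2 = c ^ 2 * ‖v‖ ^ 2 := by
  rw [norm_smul, mul_pow, Real.norm_eq_abs, sq_abs]

lemma norm_smul_add_smul_sq {a b : ℝ} (hab : a + b = 1) (v w : E) :
    ‖a • v + b • w‖ ^ 2 = a * ‖v‖ ^ 2 + b * ‖w‖ ^ 2 - a * b * ‖v - w‖ ^ 2 := by
  rw [norm_add_sq_real, norm_sub_sq_real, norm_smul_sq, norm_smul_sq, real_inner_smul_left,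
    real_inner_smul_right]
  obtain rfl := eq_sub_of_add_eq hab
  ring

lemma strongConvexOn_univ_mul_norm_sub_sq (c : ℝ) (z : E) :
    StrongConvexOn univ (2 * c) fun u => c * ‖u - z‖ ^ 2 := by
  refine ⟨convex_univ, fun x _ y _ a b _ _ hab => le_of_eq ?_⟩
  have hcomb : a • x + b • y - z = a • (x - z) + b • (y - z) := by
    rw [smul_sub, smul_sub, sub_add_sub_comm, ← add_smul, hab, one_smul]
  simp only [smul_eq_mul]
  rw [hcomb, norm_smul_add_smul_sq hab, sub_sub_sub_cancel_right]
  ring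

lemma strongConvexOn_neg_iff_convexOn_add {s : Set E} {M : ℝ} {φ : E → ℝ} :
    StrongConvexOn s (-M) φ ↔ ConvexOn ℝ s fun x => φ x + M / 2 * ‖x‖ ^ 2 := by
  rw [strongConvexOn_iff_convex]
  simp only [neg_div, neg_mul, sub_neg_eq_add]

lemma StrongConvexOn.prox_three_point {φ : E → ℝ} {M τ : ℝ} (hφ : StrongConvexOn univ (-M) φ)
    (hτ : τ ≠ 0) {x₀ g p : E}
    (hp : ∀ u, φ p + 1 / (2 * τ) * ‖p - (x₀ - τ • g)‖ ^ 2 ≤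
      φ u + 1 / (2 * τ) * ‖u - (x₀ - τ • g)‖ ^ 2) (u : E) :
    φ p + ⟪g, p - u⟫ + 1 / (2 * τ) * ‖p - x₀‖ ^ 2 + (1 / τ - M) / 2 * ‖u - p‖ ^ 2 ≤
      φ u + 1 / (2 * τ) * ‖u - x₀‖ ^ 2 := by
  have hmin := (hφ.add (strongConvexOn_univ_mul_norm_sub_sq (1 / (2 * τ)) (x₀ - τ • g)))
    |>.add_sq_le_of_isMinOn (isMinOn_univ_iff.2 hp) (mem_univ p) (mem_univ u)
  have hmod : -M + 2 * (1 / (2 * τ)) = 1 / τ - M := by field_simp; ring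
  have hshift : ∀ v, 1 / (2 * τ) * ‖v - (x₀ - τ • g)‖ ^ 2 =
      1 / (2 * τ) * ‖v - x₀‖ ^ 2 + ⟪g, v - x₀⟫ + τ / 2 * ‖g‖ ^ 2 := by
    intro v
    rw [sub_sub_eq_add_sub, add_sub_right_comm, norm_add_sq_real, real_inner_smul_right,
      norm_smul, real_inner_comm, mul_pow, Real.norm_eq_abs, sq_abs]
    field_simp
  have hsplit : ⟪g, p - x₀⟫ = ⟪g, p - u⟫ + ⟪g, u - x₀⟫ := by
    rw [← inner_add_right, sub_add_sub_cancel]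
  simp only [Pi.add_apply, hmod, hshift] at hmin
  linarith

variable [CompleteSpace E]

lemma HasGradientAt.hasDerivAt_comp_lineMap {f : E → ℝ} {g a b : E} {t : ℝ}
    (hf : HasGradientAt f g (lineMap a b t)) :
    HasDerivAt (fun s : ℝ => f (lineMap a b s)) ⟪g, b - a⟫ t := by
  simpa [Function.comp_def, InnerProductSpace.toDual_apply_apply] using
    (hasGradientAt_iff_hasFDerivAt.1 hf).comp_hasDerivAt t hasDerivAt_lineMap

lemma ConvexOn.add_inner_le_of_hasGradientAt {s : Set E} {f : E → ℝ} (hconv : ConvexOn ℝ s f)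
    {g a b : E} (ha : a ∈ s) (hb : b ∈ s) (hf : HasGradientAt f g a) :
    f a + ⟪g, b - a⟫ ≤ f b := by
  have hslope := (hconv.comp_affineMap (lineMap a b)).le_slope_of_hasDerivAt
    (x := 0) (y := 1) (by simpa) (by simpa) zero_lt_one
    (HasGradientAt.hasDerivAt_comp_lineMap (by simpa))
  simp only [slope_def_field, Function.comp_apply, lineMap_apply_one, lineMap_apply_zero,
    sub_zero, div_one] at hslope
  linarith

lemma le_add_inner_add_of_lipschitz_gradient {f : E → ℝ} {f' : E → E} {L : ℝ}
    (hf : ∀ x, HasGradientAt f (f' x) x) (hlip : ∀ u v, ‖f' u - f' v‖ ≤ L * ‖u - v‖) (a b : E) :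
    f b ≤ f a + ⟪f' a, b - a⟫ + L / 2 * ‖b - a‖ ^ 2 := by
  set d := b - a
  set h : ℝ → ℝ := fun t => f (lineMap a b t) - t * ⟪f' a, d⟫ - L / 2 * ‖d‖ ^ 2 * t ^ 2
  have hderiv : ∀ t, HasDerivAt h (⟪f' (lineMap a b t) - f' a, d⟫ - L * ‖d‖ ^ 2 * t) t := by
    intro t
    refine (((hf _).hasDerivAt_comp_lineMap.sub ((hasDerivAt_id t).mul_const ⟪f' a, d⟫)).sub
      ((hasDerivAt_pow 2 t).const_mul (L / 2 * ‖d‖ ^ 2))).congr_deriv ?_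
    rw [inner_sub_left]
    simp only [one_mul, Nat.cast_ofNat, Nat.add_one_sub_one, pow_one]
    ring
  have hgrowth : ∀ t ∈ interior (Icc (0 : ℝ) 1),
      ⟪f' (lineMap a b t) - f' a, d⟫ ≤ L * ‖d‖ ^ 2 * t := by
    intro t ht
    rw [interior_Icc] at ht
    calc ⟪f' (lineMap a b t) - f' a, d⟫ ≤ ‖f' (lineMap a b t) - f' a‖ * ‖d‖ :=
          real_inner_le_norm _ _
      _ ≤ L * ‖lineMap a b t - a‖ * ‖d‖ := by gcongr; exact hlip _ _
      _ = L * ‖d‖ ^ 2 * t := by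
          rw [← vsub_eq_sub, lineMap_vsub_left, vsub_eq_sub, norm_smul,
            Real.norm_of_nonneg ht.1.le]
          ring
  have hanti : AntitoneOn h (Icc 0 1) :=
    antitoneOn_of_deriv_nonpos (convex_Icc 0 1)
      (fun t _ => (hderiv t).continuousAt.continuousWithinAt)
      (fun t _ => (hderiv t).differentiableAt.differentiableWithinAt)
      (fun t ht => by rw [(hderiv t).deriv]; linarith [hgrowth t ht])
  have := hanti (left_mem_Icc.2 zero_le_one) (right_mem_Icc.2 zero_le_one) zero_le_one
  simp only [h, lineMap_apply_one, lineMap_apply_zero, one_mul, one_pow, mul_one, zero_mul,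
    sub_zero, ne_eq, OfNat.ofNat_ne_zero, not_false_eq_true, zero_pow, mul_zero] at this
  linarith

lemma ConvexOn.le_add_inner_add_of_lipschitz_gradient {f : E → ℝ} {f' : E → E} {L : ℝ}
    (hconv : ConvexOn ℝ univ f) (hf : ∀ x, HasGradientAt f (f' x) x)
    (hlip : ∀ u v, ‖f' u - f' v‖ ≤ L * ‖u - v‖) (q a b : E) :
    f b ≤ f a + ⟪f' q, b - a⟫ + L / 2 * ‖b - q‖ ^ 2 := by
  have hdescent := _root_.le_add_inner_add_of_lipschitz_gradient hf hlip q b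
  have hsupport := hconv.add_inner_le_of_hasGradientAt (mem_univ q) (mem_univ a) (hf q)
  have hsplit : ⟪f' q, b - q⟫ = ⟪f' q, b - a⟫ + ⟪f' q, a - q⟫ := by
    rw [← inner_add_right, sub_add_sub_cancel]
  linarith

section alphaPGD

variable {f φ : E → ℝ} {f' : E → E} {M L α τ : ℝ}

lemma alphaPGD_descent_step (hconv : ConvexOn ℝ univ f) (hf : ∀ x, HasGradientAt f (f' x) x)
    (hlip : ∀ u v, ‖f' u - f' v‖ ≤ L * ‖u - v‖) (hφ : StrongConvexOn univ (-M) φ)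
    (hα : α ∈ Icc 0 1) (hτ : 0 < τ) (hτL : τ * α * L ≤ 1) {y₁ x₀ q x₁ y₂ : E}
    (hq : q = (1 - α) • y₁ + α • x₀)
    (hx₁ : ∀ u, φ x₁ + 1 / (2 * τ) * ‖x₁ - (x₀ - τ • f' q)‖ ^ 2 ≤
      φ u + 1 / (2 * τ) * ‖u - (x₀ - τ • f' q)‖ ^ 2)
    (hy₂ : y₂ = (1 - α) • y₁ + α • x₁) :
    f y₂ + φ y₂ + α * (1 / (2 * τ) - M * (2 - α) / 2) * ‖x₁ - y₁‖ ^ 2 ≤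
      f y₁ + φ y₁ + α / (2 * τ) * ‖y₁ - x₀‖ ^ 2 := by
  obtain ⟨hα0, hα1⟩ := hα
  have hsmooth := hconv.le_add_inner_add_of_lipschitz_gradient hf hlip q y₁ y₂
  have hprox := mul_le_mul_of_nonneg_left (hφ.prox_three_point hτ.ne' hx₁ y₁) hα0
  have hweak := hφ.2 (mem_univ y₁) (mem_univ x₁) (sub_nonneg.2 hα1) hα0 (sub_add_cancel 1 α)
  simp only [← hy₂, smul_eq_mul, norm_sub_rev y₁ x₁] at hweak
  have hstep : y₂ - q = α • (x₁ - x₀) := by rw [hy₂, hq]; module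
  have hmove : y₂ - y₁ = α • (x₁ - y₁) := by rw [hy₂]; module
  rw [hstep, hmove, norm_smul_sq, real_inner_smul_right] at hsmooth
  have hcoef : L / 2 * α ^ 2 ≤ α / (2 * τ) := by
    rw [div_mul_eq_mul_div, div_le_div_iff₀ two_pos (by positivity)]
    nlinarith [mul_le_mul_of_nonneg_left hτL hα0]
  have hcoef' := mul_le_mul_of_nonneg_right hcoef (sq_nonneg ‖x₁ - x₀‖)
  rw [norm_sub_rev y₁ x₁] at hprox
  linear_combination hsmooth + hprox + hweak + hcoef'

lemma alphaPGD_lyapunov_step (hconv : ConvexOn ℝ univ f) (hf : ∀ x, HasGradientAt f (f' x) x)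
    (hlip : ∀ u v, ‖f' u - f' v‖ ≤ L * ‖u - v‖) (hφ : StrongConvexOn univ (-M) φ)
    (hα : α ∈ Ioc 0 1) (hτ : 0 < τ) (hτL : τ * α * L ≤ 1) {y₀ x₀ y₁ q x₁ y₂ : E}
    (hy₁ : y₁ = (1 - α) • y₀ + α • x₀) (hq : q = (1 - α) • y₁ + α • x₀)
    (hx₁ : ∀ u, φ x₁ + 1 / (2 * τ) * ‖x₁ - (x₀ - τ • f' q)‖ ^ 2 ≤
      φ u + 1 / (2 * τ) * ‖u - (x₀ - τ • f' q)‖ ^ 2)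
    (hy₂ : y₂ = (1 - α) • y₁ + α • x₁) :
    f y₁ + φ y₁ - (f y₂ + φ y₂) ≥
      -(α / (2 * τ) * (1 - 1 / α) ^ 2) * ‖y₁ - y₀‖ ^ 2 +
        1 / α * (1 / (2 * τ) - M * (2 - α) / 2) * ‖y₂ - y₁‖ ^ 2 := by
  have hdescent := alphaPGD_descent_step hconv hf hlip hφ ⟨hα.1.le, hα.2⟩ hτ hτL hq hx₁ hy₂
  have hy₂y₁ : y₂ - y₁ = α • (x₁ - y₁) := by rw [hy₂]; module
  have hy₁y₀ : y₁ - y₀ = α • (x₀ - y₀) := by rw [hy₁]; module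
  have hy₁x₀ : y₁ - x₀ = (1 - α) • (y₀ - x₀) := by rw [hy₁]; module
  rw [hy₂y₁, hy₁y₀, norm_smul_sq, norm_smul_sq]
  rw [hy₁x₀, norm_smul_sq, norm_sub_rev y₀ x₀] at hdescent
  have hα0 := hα.1.ne'
  have hδ : α / (2 * τ) * (1 - 1 / α) ^ 2 * (α ^ 2 * ‖x₀ - y₀‖ ^ 2) =
      α / (2 * τ) * ((1 - α) ^ 2 * ‖x₀ - y₀‖ ^ 2) := by field_simp; ring
  have hγ : 1 / α * (1 / (2 * τ) - M * (2 - α) / 2) * (α ^ 2 * ‖x₁ - y₁‖ ^ 2) =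
      α * (1 / (2 * τ) - M * (2 - α) / 2) * ‖x₁ - y₁‖ ^ 2 := by field_simp
  linarith

end alphaPGD

theorem alphaPGD_lyapunov_decrease_general {n : ℕ}
    (f : EuclideanSpace ℝ (Fin n) → ℝ)
    (f' : EuclideanSpace ℝ (Fin n) → EuclideanSpace ℝ (Fin n))
    (φ : EuclideanSpace ℝ (Fin n) → ℝ) (M L_f α τ : ℝ)
    (hf : ∀ x, HasGradientAt f (f' x) x)
    (hfconv : ConvexOn ℝ Set.univ f)
    (hlip : ∀ u v, ‖f' u - f' v‖ ≤ L_f * ‖u - v‖)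
    (hφ : ConvexOn ℝ Set.univ (fun x => φ x + M / 2 * ‖x‖ ^ 2))
    (hα : α ∈ Set.Ioo (0 : ℝ) 1) (hτ : 0 < τ) (hτL : τ * α * L_f < 1)
    (F : EuclideanSpace ℝ (Fin n) → ℝ) (hF : ∀ x, F x = f x + φ x)
    (q x y : ℕ → EuclideanSpace ℝ (Fin n))
    (hq : ∀ k, q (k + 1) = (1 - α) • y k + α • x k)
    (hx : ∀ k, ∀ u,
      φ (x (k + 1)) + 1 / (2 * τ) * ‖x (k + 1) - (x k - τ • f' (q (k + 1)))‖ ^ 2 ≤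
        φ u + 1 / (2 * τ) * ‖u - (x k - τ • f' (q (k + 1)))‖ ^ 2)
    (hy : ∀ k, y (k + 1) = (1 - α) • y k + α • x (k + 1))
    (δ γ : ℝ)
    (hδ : δ = α / (2 * τ) * (1 - 1 / α) ^ 2)
    (hγ : γ = 1 / α * (1 / (2 * τ) - M * (2 - α) / 2)) :
    (∀ k : ℕ, 1 ≤ k →
      F (y k) - F (y (k + 1)) ≥
        -δ * ‖y k - y (k - 1)‖ ^ 2 + γ * ‖y (k + 1) - y k‖ ^ 2) ∧
    (τ * M < α → ∀ k : ℕ, 1 ≤ k →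
      F (y (k + 1)) + δ * ‖y (k + 1) - y k‖ ^ 2 ≤
        F (y k) + δ * ‖y k - y (k - 1)‖ ^ 2) := by
  have hdecrease : ∀ k : ℕ, 1 ≤ k →
      F (y k) - F (y (k + 1)) ≥ -δ * ‖y k - y (k - 1)‖ ^ 2 + γ * ‖y (k + 1) - y k‖ ^ 2 := by
    intro k hk
    obtain ⟨m, rfl⟩ := Nat.exists_eq_add_of_le' hk
    rw [hF, hF, hδ, hγ, Nat.add_sub_cancel]
    exact alphaPGD_lyapunov_step hfconv hf hlip (strongConvexOn_neg_iff_convexOn_add.2 hφ)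
      (Ioo_subset_Ioc_self hα) hτ hτL.le (hy m) (hq (m + 1)) (hx (m + 1)) (hy (m + 1))
  refine ⟨hdecrease, fun hτM k hk => ?_⟩
  have hgap : γ - δ = (2 - α) * (α - τ * M) / (2 * τ * α) := by
    have hα0 := hα.1.ne'
    rw [hδ, hγ]
    field_simp
    ring
  have hγδ : 0 ≤ γ - δ := by
    rw [hgap]
    exact div_nonneg (mul_nonneg (by linarith [hα.2]) (by linarith))
      (mul_pos (mul_pos two_pos hτ) hα.1).le
  linarith [hdecrease k hk, mul_nonneg hγδ (sq_nonneg ‖y (k + 1) - y k‖)]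

/-- Lyapunov decrease for αPGD: with `f` convex, differentiable, `∇f`
`L_f`-Lipschitz, `φ` `M`-weakly convex (`M ≥ 0`), `α ∈ (0,1)`, `τ > 0` with `τ·α·L_f < 1`,
`F = f + φ`, and αPGD iterates, one has for all `k ≥ 1`
`F(y_k) − F(y_{k+1}) ≥ −δ‖y_k − y_{k−1}‖² + γ‖y_{k+1} − y_k‖²` where
`δ = (α/(2τ))(1 − 1/α)²` and `γ = (1/α)(1/(2τ) − M(2−α)/2)`. Consequently, if in
addition `τ < α/M` (stated as `τ·M < α`), the quantity `E_k = F(y_k) + δ‖y_k − y_{k−1}‖²`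
is non-increasing in `k`. -/
theorem alphaPGD_lyapunov_decrease {n : ℕ}
    (f : EuclideanSpace ℝ (Fin n) → ℝ)
    (f' : EuclideanSpace ℝ (Fin n) → EuclideanSpace ℝ (Fin n))
    (φ : EuclideanSpace ℝ (Fin n) → ℝ) (M L_f α τ : ℝ)
    (hf : ∀ x, HasGradientAt f (f' x) x)
    (hfconv : ConvexOn ℝ Set.univ f)
    (hlip : ∀ u v, ‖f' u - f' v‖ ≤ L_f * ‖u - v‖)
    (hM : 0 ≤ M)
    (hφ : ConvexOn ℝ Set.univ (fun x => φ x + M / 2 * ‖x‖ ^ 2))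
    (hα : α ∈ Set.Ioo (0 : ℝ) 1) (hτ : 0 < τ) (hτL : τ * α * L_f < 1)
    (F : EuclideanSpace ℝ (Fin n) → ℝ) (hF : ∀ x, F x = f x + φ x)
    (q x y : ℕ → EuclideanSpace ℝ (Fin n))
    (hq : ∀ k, q (k + 1) = (1 - α) • y k + α • x k)
    (hx : ∀ k, ∀ u,
      φ (x (k + 1)) + 1 / (2 * τ) * ‖x (k + 1) - (x k - τ • f' (q (k + 1)))‖ ^ 2 ≤
        φ u + 1 / (2 * τ) * ‖u - (x k - τ • f' (q (k + 1)))‖ ^ 2)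
    (hy : ∀ k, y (k + 1) = (1 - α) • y k + α • x (k + 1))
    (δ γ : ℝ)
    (hδ : δ = α / (2 * τ) * (1 - 1 / α) ^ 2)
    (hγ : γ = 1 / α * (1 / (2 * τ) - M * (2 - α) / 2)) :
    (∀ k : ℕ, 1 ≤ k →
      F (y k) - F (y (k + 1)) ≥
        -δ * ‖y k - y (k - 1)‖ ^ 2 + γ * ‖y (k + 1) - y k‖ ^ 2) ∧
    (τ * M < α → ∀ k : ℕ, 1 ≤ k →
      F (y (k + 1)) + δ * ‖y (k + 1) - y k‖ ^ 2 ≤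
        F (y k) + δ * ‖y k - y (k - 1)‖ ^ 2) :=
  alphaPGD_lyapunov_decrease_general f f' φ M L_f α τ hf hfconv hlip hφ hα hτ hτL F hF q x y hq hx
    hy δ γ hδ hγ
end InnerProductSpace
end

section
/- Convergence of ProxPnP-PGD: let f : ℝⁿ → ℝ be differentiable with ∇f L_f-Lipschitz and bounded below, let λ > 0, let 0 ≤ M < 1 and let φ : ℝⁿ → ℝ be M-weakly convex and bounded below, and assume λ·L_f + M < 2. Set F = λf + φ with lower bound F*. Let (x_k) be a sequence such that for each k, x_{k+1} minimizes u ↦ φ(u) + (1/2)‖u − (x_k − λ·∇f(x_k))‖² over ℝⁿ (PGD with stepsize τ = 1 applied to λf + φ). Then (F(x_k)) is non-increasing, Σ_{k=0}^∞ ‖x_{k+1} − x_k‖² ≤ (F(x_0) − F*)/(1 − (M + λL_f)/2) < ∞, and for every K ≥ 1, min_{0 ≤ k < K} ‖x_{k+1} − x_k‖² ≤ (1/K)·(F(x_0) − F*)/(1 − (M + λL_f)/2). -/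
open RealInnerProductSpace

/-!
The prox objective `u ↦ φ u + ‖u - z‖² / 2` is `(1 - M)`-strongly convex, so its minimiser
`x (k + 1)` beats `x k` by `(1 - M) / 2 * ‖x (k + 1) - x k‖²`. Adding `λ` times the descent lemma
for the `L_f`-smooth `f` gives the sufficient decrease
`F (x (k + 1)) + (1 - (M + λ L_f) / 2) ‖x (k + 1) - x k‖² ≤ F (x k)`, and telescoping it against
`F*` bounds every partial sum of the squared steps, hence the series and the least of its first
`K` terms.
-/

open Set

open Filter Topology in
theorem StrongConvexOn.add_le_of_isMinOn {E : Type*} [NormedAddCommGroup E] [NormedSpace ℝ E]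
    {s : Set E} {m : ℝ} {g : E → ℝ} {p u : E} (hg : StrongConvexOn s m g) (hp : IsMinOn g s p)
    (hps : p ∈ s) (hus : u ∈ s) : g p + m / 2 * ‖u - p‖ ^ 2 ≤ g u := by
  have along_segment : ∀ t ∈ Ioo (0 : ℝ) 1, g p ≤ g u - (1 - t) * (m / 2 * ‖u - p‖ ^ 2) := by
    rintro t ⟨ht0, ht1⟩
    have hab : 1 - t + t = 1 := sub_add_cancel 1 t
    have hmin := isMinOn_iff.1 hp _ (hg.1 hps hus (sub_nonneg.2 ht1.le) ht0.le hab)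
    have hconv := hg.2 hps hus (sub_nonneg.2 ht1.le) ht0.le hab
    rw [norm_sub_rev, smul_eq_mul, smul_eq_mul] at hconv
    refine le_of_mul_le_mul_left ?_ ht0
    linear_combination hmin.trans hconv
  have hlim : Tendsto (fun t : ℝ => g u - (1 - t) * (m / 2 * ‖u - p‖ ^ 2)) (𝓝[>] 0)
      (𝓝 (g u - m / 2 * ‖u - p‖ ^ 2)) := by
    have hcont : Continuous fun t : ℝ => g u - (1 - t) * (m / 2 * ‖u - p‖ ^ 2) := by fun_prop
    simpa using (hcont.tendsto 0).mono_left nhdsWithin_le_nhds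
  have hlimit := ge_of_tendsto hlim (eventually_of_mem (Ioo_mem_nhdsGT one_pos) along_segment)
  linarith

theorem ConvexOn.strongConvexOn_add_half_norm_sub_sq {E : Type*} [NormedAddCommGroup E]
    [InnerProductSpace ℝ E] {s : Set E} {φ : E → ℝ} {M : ℝ}
    (hφ : ConvexOn ℝ s (fun x => φ x + M / 2 * ‖x‖ ^ 2)) (z : E) :
    StrongConvexOn s (1 - M) (fun u => φ u + 1 / 2 * ‖u - z‖ ^ 2) := by
  rw [strongConvexOn_iff_convex]
  refine ((hφ.add ((innerₗ E (-z)).convexOn hφ.1)).add_const (1 / 2 * ‖z‖ ^ 2)).congr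
    fun u _ => ?_
  simp only [Pi.add_apply, innerₗ_apply_apply, inner_neg_left, norm_sub_sq_real,
    real_inner_comm z u]
  ring

theorem prox_add_sq_le {E : Type*} [NormedAddCommGroup E] [InnerProductSpace ℝ E]
    {φ : E → ℝ} {M : ℝ} (hφ : ConvexOn ℝ univ (fun x => φ x + M / 2 * ‖x‖ ^ 2)) {z p : E}
    (hp : ∀ u, φ p + 1 / 2 * ‖p - z‖ ^ 2 ≤ φ u + 1 / 2 * ‖u - z‖ ^ 2) (u : E) :
    φ p + 1 / 2 * ‖p - z‖ ^ 2 + (1 - M) / 2 * ‖u - p‖ ^ 2 ≤ φ u + 1 / 2 * ‖u - z‖ ^ 2 :=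
  (hφ.strongConvexOn_add_half_norm_sub_sq z).add_le_of_isMinOn (isMinOn_univ_iff.2 hp)
    (mem_univ p) (mem_univ u)

theorem le_add_inner_add_sq_of_lipschitz_gradient {E : Type*} [NormedAddCommGroup E]
    [InnerProductSpace ℝ E] [CompleteSpace E] {f : E → ℝ} {f' : E → E} {L : ℝ}
    (hf : ∀ x, HasGradientAt f (f' x) x) (hlip : ∀ u v, ‖f' u - f' v‖ ≤ L * ‖u - v‖) (x y : E) :
    f y ≤ f x + ⟪f' x, y - x⟫ + L / 2 * ‖y - x‖ ^ 2 := by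
  set d := y - x
  let g : ℝ → ℝ := fun t => f (x + t • d) - t * ⟪f' x, d⟫ - L / 2 * t ^ 2 * ‖d‖ ^ 2
  have hg : ∀ t, HasDerivAt g (⟪f' (x + t • d) - f' x, d⟫ - L * t * ‖d‖ ^ 2) t := by
    intro t
    have hline : HasDerivAt (fun t : ℝ => x + t • d) d t := by
      simpa using ((hasDerivAt_id t).smul_const d).const_add x
    have hfline := (hf (x + t • d)).hasFDerivAt.comp_hasDerivAt t hline
    have hsq := ((hasDerivAt_pow 2 t).const_mul (L / 2)).mul_const (‖d‖ ^ 2)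
    refine ((hfline.sub ((hasDerivAt_id t).mul_const ⟪f' x, d⟫)).sub hsq).congr_deriv ?_
    simp only [InnerProductSpace.toDual_apply_apply, inner_sub_left]
    ring
  have hg_nonpos : ∀ t, 0 < t → ⟪f' (x + t • d) - f' x, d⟫ - L * t * ‖d‖ ^ 2 ≤ 0 := by
    intro t ht
    have hstep : ‖f' (x + t • d) - f' x‖ ≤ L * t * ‖d‖ := by
      simpa [norm_smul, abs_of_pos ht, mul_assoc] using hlip (x + t • d) x
    calc ⟪f' (x + t • d) - f' x, d⟫ - L * t * ‖d‖ ^ 2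
        ≤ ‖f' (x + t • d) - f' x‖ * ‖d‖ - L * t * ‖d‖ ^ 2 := by
          gcongr; exact real_inner_le_norm _ _
      _ ≤ 0 := by nlinarith [norm_nonneg d]
  have hanti : AntitoneOn g (Ici 0) :=
    antitoneOn_of_hasDerivWithinAt_nonpos (convex_Ici 0)
      (fun t _ => (hg t).continuousAt.continuousWithinAt)
      (fun t _ => (hg t).hasDerivWithinAt)
      (fun t ht => hg_nonpos t (by simpa using ht))
  have h10 := hanti (mem_Ici.2 le_rfl) (mem_Ici.2 zero_le_one) zero_le_one
  simp only [g, one_smul, zero_smul, add_zero, add_sub_cancel, d] at h10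
  linarith

theorem pgd_step_descent {E : Type*} [NormedAddCommGroup E] [InnerProductSpace ℝ E]
    [CompleteSpace E] {f φ : E → ℝ} {f' : E → E} {L M lam : ℝ}
    (hf : ∀ x, HasGradientAt f (f' x) x) (hlip : ∀ u v, ‖f' u - f' v‖ ≤ L * ‖u - v‖)
    (hlam : 0 ≤ lam) (hφ : ConvexOn ℝ univ (fun x => φ x + M / 2 * ‖x‖ ^ 2)) {x p : E}
    (hp : ∀ u, φ p + 1 / 2 * ‖p - (x - lam • f' x)‖ ^ 2 ≤
      φ u + 1 / 2 * ‖u - (x - lam • f' x)‖ ^ 2) :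
    lam * f p + φ p + (1 - (M + lam * L) / 2) * ‖p - x‖ ^ 2 ≤ lam * f x + φ x := by
  have hprox := prox_add_sq_le hφ hp x
  have hdescent := mul_le_mul_of_nonneg_left
    (le_add_inner_add_sq_of_lipschitz_gradient hf hlip x p) hlam
  have hexpand : ‖p - (x - lam • f' x)‖ ^ 2
      = ‖p - x‖ ^ 2 + 2 * (lam * ⟪f' x, p - x⟫) + ‖x - (x - lam • f' x)‖ ^ 2 := by
    rw [show p - (x - lam • f' x) = (p - x) + lam • f' x by abel, norm_add_sq_real,
      sub_sub_cancel, real_inner_smul_right, real_inner_comm]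
  rw [norm_sub_rev x p] at hprox
  linarith

theorem sum_range_le_of_sufficient_decrease {F b : ℕ → ℝ} {c Fstar : ℝ} (hc : 0 < c)
    (hdec : ∀ k, F (k + 1) + c * b k ≤ F k) (hbdd : ∀ k, Fstar ≤ F k) (K : ℕ) :
    ∑ k ∈ Finset.range K, b k ≤ (F 0 - Fstar) / c := by
  rw [le_div_iff₀ hc, Finset.sum_mul]
  calc ∑ k ∈ Finset.range K, b k * c
      ≤ ∑ k ∈ Finset.range K, (F k - F (k + 1)) :=
        Finset.sum_le_sum fun k _ => by linarith [hdec k]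
    _ = F 0 - F K := Finset.sum_range_sub' F K
    _ ≤ F 0 - Fstar := by linarith [hbdd K]

theorem exists_lt_le_of_sum_range_le {b : ℕ → ℝ} {B : ℝ} {K : ℕ} (hK : 1 ≤ K)
    (h : ∑ k ∈ Finset.range K, b k ≤ B) : ∃ k < K, b k ≤ 1 / (K : ℝ) * B := by
  have hK' : (K : ℝ) ≠ 0 := by positivity
  have hsum : ∑ k ∈ Finset.range K, b k ≤ ∑ _k ∈ Finset.range K, 1 / (K : ℝ) * B := by
    rwa [Finset.sum_const, Finset.card_range, nsmul_eq_mul, ← mul_assoc, mul_one_div_cancel hK',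
      one_mul]
  obtain ⟨k, hk, hle⟩ := Finset.exists_le_of_sum_le (Finset.nonempty_range_iff.2 (by omega)) hsum
  exact ⟨k, Finset.mem_range.1 hk, hle⟩

theorem proxPnP_PGD_convergence_general {n : ℕ}
    (f : EuclideanSpace ℝ (Fin n) → ℝ)
    (f' : EuclideanSpace ℝ (Fin n) → EuclideanSpace ℝ (Fin n))
    (φ : EuclideanSpace ℝ (Fin n) → ℝ) (M L_f lam Fstar : ℝ)
    (hf : ∀ x, HasGradientAt f (f' x) x)
    (hlip : ∀ u v, ‖f' u - f' v‖ ≤ L_f * ‖u - v‖)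
    (hlam : 0 < lam)
    (hφ : ConvexOn ℝ Set.univ (fun x => φ x + M / 2 * ‖x‖ ^ 2))
    (hcond : lam * L_f + M < 2)
    (F : EuclideanSpace ℝ (Fin n) → ℝ) (hF : ∀ x, F x = lam * f x + φ x)
    (hFstar : ∀ x, Fstar ≤ F x)
    (x : ℕ → EuclideanSpace ℝ (Fin n))
    (hx : ∀ k, ∀ u,
      φ (x (k + 1)) + 1 / 2 * ‖x (k + 1) - (x k - lam • f' (x k))‖ ^ 2 ≤
        φ u + 1 / 2 * ‖u - (x k - lam • f' (x k))‖ ^ 2) :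
    (∀ k, F (x (k + 1)) ≤ F (x k)) ∧
    Summable (fun k : ℕ => ‖x (k + 1) - x k‖ ^ 2) ∧
    (∑' k : ℕ, ‖x (k + 1) - x k‖ ^ 2) ≤
      (F (x 0) - Fstar) / (1 - (M + lam * L_f) / 2) ∧
    (∀ K : ℕ, 1 ≤ K → ∃ k < K,
      ‖x (k + 1) - x k‖ ^ 2 ≤
        (1 / (K : ℝ)) * ((F (x 0) - Fstar) / (1 - (M + lam * L_f) / 2))) := by
  have hc : 0 < 1 - (M + lam * L_f) / 2 := by linarith
  have hdec : ∀ k,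
      F (x (k + 1)) + (1 - (M + lam * L_f) / 2) * ‖x (k + 1) - x k‖ ^ 2 ≤ F (x k) :=
    fun k => by simpa only [hF] using pgd_step_descent hf hlip hlam.le hφ (hx k)
  have hsum := sum_range_le_of_sufficient_decrease hc hdec fun k => hFstar (x k)
  have hnonneg : ∀ k, 0 ≤ ‖x (k + 1) - x k‖ ^ 2 := fun k => by positivity
  refine ⟨fun k => ?_, summable_of_sum_range_le hnonneg hsum,
    Real.tsum_le_of_sum_range_le hnonneg hsum, fun K hK => exists_lt_le_of_sum_range_le hK (hsum K)⟩
  linarith [hdec k, mul_nonneg hc.le (hnonneg k)]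

/-- Convergence of ProxPnP-PGD: with `f` differentiable, `∇f`
`L_f`-Lipschitz, bounded below; `λ > 0`; `0 ≤ M < 1`, `φ` `M`-weakly convex and bounded
below; `λL_f + M < 2`; `F = λf + φ` with lower bound `F*`; and iterates
`x_{k+1} ∈ Prox_φ(x_k − λ∇f(x_k))`: `(F(x_k))` is non-increasing,
`Σ_k ‖x_{k+1} − x_k‖² ≤ (F(x_0) − F*)/(1 − (M + λL_f)/2) < ∞`, and for every `K ≥ 1`
there is `k < K` with `‖x_{k+1} − x_k‖² ≤ (1/K)·(F(x_0) − F*)/(1 − (M + λL_f)/2)`. -/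
theorem proxPnP_PGD_convergence {n : ℕ}
    (f : EuclideanSpace ℝ (Fin n) → ℝ)
    (f' : EuclideanSpace ℝ (Fin n) → EuclideanSpace ℝ (Fin n))
    (φ : EuclideanSpace ℝ (Fin n) → ℝ) (M L_f lam Fstar : ℝ)
    (hf : ∀ x, HasGradientAt f (f' x) x)
    (hlip : ∀ u v, ‖f' u - f' v‖ ≤ L_f * ‖u - v‖)
    (hfbd : ∃ c, ∀ x, c ≤ f x)
    (hlam : 0 < lam)
    (hM0 : 0 ≤ M) (hM1 : M < 1)
    (hφ : ConvexOn ℝ Set.univ (fun x => φ x + M / 2 * ‖x‖ ^ 2))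
    (hφbd : ∃ c, ∀ x, c ≤ φ x)
    (hcond : lam * L_f + M < 2)
    (F : EuclideanSpace ℝ (Fin n) → ℝ) (hF : ∀ x, F x = lam * f x + φ x)
    (hFstar : ∀ x, Fstar ≤ F x)
    (x : ℕ → EuclideanSpace ℝ (Fin n))
    (hx : ∀ k, ∀ u,
      φ (x (k + 1)) + 1 / 2 * ‖x (k + 1) - (x k - lam • f' (x k))‖ ^ 2 ≤
        φ u + 1 / 2 * ‖u - (x k - lam • f' (x k))‖ ^ 2) :
    (∀ k, F (x (k + 1)) ≤ F (x k)) ∧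
    Summable (fun k : ℕ => ‖x (k + 1) - x k‖ ^ 2) ∧
    (∑' k : ℕ, ‖x (k + 1) - x k‖ ^ 2) ≤
      (F (x 0) - Fstar) / (1 - (M + lam * L_f) / 2) ∧
    (∀ K : ℕ, 1 ≤ K → ∃ k < K,
      ‖x (k + 1) - x k‖ ^ 2 ≤
        (1 / (K : ℝ)) * ((F (x 0) - Fstar) / (1 - (M + lam * L_f) / 2))) :=
  proxPnP_PGD_convergence_general f f' φ M L_f lam Fstar hf hlip hlam hφ hcond F hF hFstar x hx
end
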